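/- Let E be a real Banach space and let (S(t))_{t≥0} be a strongly continuous semigroup of bounded linear operators on E such that S(t) is a compact operator for every t > 0 and there exist constants K ≥ 1 and δ > 0 with ‖S(t)‖ ≤ K e^{−δ t} for all t ≥ 0. Then for every C > 0 there exists a compact set L ⊆ E such that for every t ≥ 0 and every strongly measurable function h : [0,t] → E with ‖h(r)‖ ≤ C for all r ∈ [0,t], the Bochner integral ∫₀ᵗ S(r) h(r) dr belongs to L. -/

import Mathlib

/-!
Splitting `∫₀ᵗ S(r) h(r) dr` at a small time `s` gives
`∫₀ˢ S(r) h(r) dr + S(s) ∫₀^{t-s} S(r) h(r + s) dr`. The first term has norm at most `K C s`; the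
second lies in the image under the compact operator `S(s)` of the set of all such integrals, which
exponential stability bounds by `K C / δ`. Hence that set lies within `K C s` of a relatively
compact set for every `s > 0`, so it is totally bounded and its closure is the compact set sought.
-/

open MeasureTheory Topology Filter Set

open scoped Pointwise

noncomputable section

theorem totallyBounded_of_forall_subset_add {G : Type*} [AddCommGroup G] [UniformSpace G]
    [IsUniformAddGroup G] {s : Set G}
    (h : ∀ U ∈ 𝓝 (0 : G), ∃ t : Set G, TotallyBounded t ∧ s ⊆ t + U) : TotallyBounded s := by
  rw [totallyBounded_iff_subset_finite_iUnion_nhds_zero]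
  intro U hU
  obtain ⟨V, hV, hVU⟩ := exists_nhds_zero_half hU
  obtain ⟨t, ht, hst⟩ := h V hV
  obtain ⟨F, hF, htF⟩ := totallyBounded_iff_subset_finite_iUnion_nhds_zero.mp ht V hV
  refine ⟨F, hF, ?_⟩
  simp only [iUnion_vadd_set, vadd_eq_add] at htF ⊢
  grw [hst, htF, add_assoc, add_subset_iff.mpr hVU]

theorem continuous_clm_apply_of_norm_le {X E F : Type*} [TopologicalSpace X]
    [SeminormedAddCommGroup E] [NormedSpace ℝ E] [SeminormedAddCommGroup F] [NormedSpace ℝ F]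
    {T : X → E →L[ℝ] F} {K : ℝ} (hT : ∀ x, Continuous fun r => T r x) (hK : ∀ r, ‖T r‖ ≤ K) :
    Continuous fun p : X × E => T p.1 p.2 := by
  refine continuous_iff_continuousAt.2 fun ⟨r₀, x₀⟩ => ?_
  have hdiff : Tendsto (fun p : X × E => T p.1 (p.2 - x₀)) (𝓝 (r₀, x₀)) (𝓝 0) := by
    refine squeeze_zero_norm (fun p => (T p.1).le_of_opNorm_le (hK p.1) _) ?_
    simpa using ((continuous_snd.sub (continuous_const (y := x₀))).norm.const_mul K).tendsto
      (r₀, x₀)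
  simpa [ContinuousAt] using hdiff.add (((hT x₀).comp continuous_fst).tendsto (r₀, x₀))

theorem integral_exp_neg_mul_le_inv {δ : ℝ} (hδ : 0 < δ) (t : ℝ) :
    ∫ r in (0 : ℝ)..t, Real.exp (-δ * r) ≤ δ⁻¹ := by
  rw [intervalIntegral.integral_comp_mul_left Real.exp (neg_ne_zero.2 hδ.ne'), integral_exp,
    mul_zero, Real.exp_zero, smul_eq_mul, inv_neg, neg_mul_comm, neg_sub]
  have := Real.exp_pos (-δ * t)
  have := inv_pos.2 hδ
  nlinarith

theorem norm_le_of_norm_le_mul_exp_neg {α : Type*} [SeminormedAddCommGroup α] {f : ℝ → α}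
    {K δ : ℝ} (hδ : 0 ≤ δ) (hbound : ∀ t, 0 ≤ t → ‖f t‖ ≤ K * Real.exp (-δ * t)) (t : ℝ)
    (ht : 0 ≤ t) : ‖f t‖ ≤ K := by
  have hK : 0 ≤ K := (norm_nonneg _).trans (by simpa using hbound 0 le_rfl)
  refine (hbound t ht).trans (mul_le_of_le_one_right hK (Real.exp_le_one_iff.2 ?_))
  nlinarith

section SemigroupIntegrals

variable {E : Type*} [NormedAddCommGroup E] [NormedSpace ℝ E] {S : ℝ → E →L[ℝ] E} {K C : ℝ}
  {h : ℝ → E}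

theorem stronglyMeasurable_clm_apply_max_zero
    (hScont : ∀ x, ContinuousOn (fun t => S t x) (Ici 0)) (hSb : ∀ t, 0 ≤ t → ‖S t‖ ≤ K)
    (hh : StronglyMeasurable h) :
    StronglyMeasurable fun r => S (max r 0) (h r) :=
  have hcont : Continuous fun p : ℝ × E => S (max p.1 0) p.2 :=
    continuous_clm_apply_of_norm_le
      (fun x => (hScont x).comp_continuous (continuous_id.max continuous_const)
        (fun r => le_max_right r 0))
      (fun r => hSb _ (le_max_right r 0))
  hcont.comp_stronglyMeasurable (stronglyMeasurable_id.prodMk hh)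

theorem intervalIntegrable_clm_apply (hScont : ∀ x, ContinuousOn (fun t => S t x) (Ici 0))
    (hSb : ∀ t, 0 ≤ t → ‖S t‖ ≤ K) (hh : StronglyMeasurable h) {t : ℝ} (ht : 0 ≤ t)
    (hC : ∀ r ∈ Icc 0 t, ‖h r‖ ≤ C) :
    IntervalIntegrable (fun r => S r (h r)) volume 0 t := by
  rw [intervalIntegrable_iff_integrableOn_Ioc_of_le ht]
  have hbdd : ∀ r ∈ Ioc 0 t, ‖S (max r 0) (h r)‖ ≤ K * C := fun r hr => by
    rw [max_eq_left hr.1.le]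
    exact (S r).le_of_opNorm_le_of_le (hSb r hr.1.le) (hC r (Ioc_subset_Icc_self hr))
  refine (Measure.integrableOn_of_bounded measure_Ioc_lt_top.ne
    (stronglyMeasurable_clm_apply_max_zero hScont hSb hh).aestronglyMeasurable
    (ae_restrict_of_forall_mem measurableSet_Ioc hbdd)).congr_fun
    (fun r hr => by simp only [max_eq_left hr.1.le]) measurableSet_Ioc

theorem norm_integral_clm_apply_le_mul (hSb : ∀ t, 0 ≤ t → ‖S t‖ ≤ K) {t : ℝ} (ht : 0 ≤ t)
    (hC : ∀ r ∈ Icc 0 t, ‖h r‖ ≤ C) :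
    ‖∫ r in (0 : ℝ)..t, S r (h r)‖ ≤ K * C * t := by
  have := intervalIntegral.norm_integral_le_of_norm_le_const (f := fun r => S r (h r))
    (C := K * C) (a := 0) (b := t) fun r hr => by
      rw [uIoc_of_le ht] at hr
      exact (S r).le_of_opNorm_le_of_le (hSb r hr.1.le) (hC r (Ioc_subset_Icc_self hr))
  rwa [sub_zero, abs_of_nonneg ht] at this

theorem norm_integral_clm_apply_le_div {δ : ℝ}
    (hbound : ∀ t, 0 ≤ t → ‖S t‖ ≤ K * Real.exp (-δ * t)) (hδ : 0 < δ) {t : ℝ} (ht : 0 ≤ t)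
    (hC : ∀ r ∈ Icc 0 t, ‖h r‖ ≤ C) :
    ‖∫ r in (0 : ℝ)..t, S r (h r)‖ ≤ K * C / δ := by
  have hK : 0 ≤ K := (norm_nonneg _).trans (by simpa using hbound 0 le_rfl)
  have hC₀ : 0 ≤ C := (norm_nonneg _).trans (hC 0 ⟨le_rfl, ht⟩)
  calc ‖∫ r in (0 : ℝ)..t, S r (h r)‖
      ≤ ∫ r in (0 : ℝ)..t, K * C * Real.exp (-δ * r) := by
        refine intervalIntegral.norm_integral_le_of_norm_le ht (ae_of_all _ fun r hr => ?_)
          (Continuous.intervalIntegrable (by fun_prop) _ _)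
        calc ‖S r (h r)‖ ≤ K * Real.exp (-δ * r) * C :=
              (S r).le_of_opNorm_le_of_le (hbound r hr.1.le) (hC r (Ioc_subset_Icc_self hr))
          _ = K * C * Real.exp (-δ * r) := by ring
    _ = K * C * ∫ r in (0 : ℝ)..t, Real.exp (-δ * r) := intervalIntegral.integral_const_mul _ _
    _ ≤ K * C * δ⁻¹ := by gcongr; exact integral_exp_neg_mul_le_inv hδ t
    _ = K * C / δ := (div_eq_mul_inv _ _).symm

theorem integral_clm_apply_eq_add_apply_integral [CompleteSpace E]
    (hSadd : ∀ s t : ℝ, 0 ≤ s → 0 ≤ t → S (s + t) = (S s).comp (S t))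
    (hScont : ∀ x, ContinuousOn (fun t => S t x) (Ici 0))
    (hSb : ∀ t, 0 ≤ t → ‖S t‖ ≤ K) (hh : StronglyMeasurable h) {s t : ℝ} (hs : 0 ≤ s)
    (hst : s ≤ t) (hC : ∀ r ∈ Icc 0 t, ‖h r‖ ≤ C) :
    ∫ r in (0 : ℝ)..t, S r (h r) =
      (∫ r in (0 : ℝ)..s, S r (h r)) + S s (∫ r in (0 : ℝ)..t - s, S r (h (r + s))) := by
  have hint := intervalIntegrable_clm_apply hScont hSb hh (hs.trans hst) hC
  have hint_shift : IntervalIntegrable (fun r => S r (h (r + s))) volume 0 (t - s) :=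
    intervalIntegrable_clm_apply hScont hSb (hh.comp_measurable (measurable_add_const s))
      (sub_nonneg.2 hst) fun r hr => hC _ ⟨by linarith [hr.1], by linarith [hr.2]⟩
  rw [← intervalIntegral.integral_add_adjacent_intervals (b := s)
    (hint.mono_set (uIcc_subset_uIcc_left (mem_uIcc_of_le hs hst)))
    (hint.mono_set (uIcc_subset_uIcc_right (mem_uIcc_of_le hs hst))),
    ← (S s).intervalIntegral_comp_comm hint_shift]
  have hshift : ∫ r in s..t, S r (h r) = ∫ r in (0 : ℝ)..t - s, S (r + s) (h (r + s)) := by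
    rw [intervalIntegral.integral_comp_add_right (fun r => S r (h r)), zero_add, sub_add_cancel]
  rw [hshift]
  congr 1
  refine intervalIntegral.integral_congr fun r hr => ?_
  rw [uIcc_of_le (sub_nonneg.2 hst)] at hr
  simp only [add_comm r s, hSadd s r hs hr.1, ContinuousLinearMap.comp_apply]

def reachableSet (S : ℝ → E →L[ℝ] E) (C : ℝ) : Set E :=
  {x | ∃ t, 0 ≤ t ∧ ∃ h : ℝ → E, StronglyMeasurable h ∧ (∀ r ∈ Icc 0 t, ‖h r‖ ≤ C) ∧
    ∫ r in (0 : ℝ)..t, S r (h r) = x}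

theorem reachableSet_subset_closedBall {δ : ℝ}
    (hbound : ∀ t, 0 ≤ t → ‖S t‖ ≤ K * Real.exp (-δ * t)) (hδ : 0 < δ) :
    reachableSet S C ⊆ Metric.closedBall 0 (K * C / δ) := by
  rintro _ ⟨t, ht, h, -, hC, rfl⟩
  exact mem_closedBall_zero_iff.2 (norm_integral_clm_apply_le_div hbound hδ ht hC)

theorem reachableSet_subset_image_add_closedBall [CompleteSpace E]
    (hSadd : ∀ s t : ℝ, 0 ≤ s → 0 ≤ t → S (s + t) = (S s).comp (S t))
    (hScont : ∀ x, ContinuousOn (fun t => S t x) (Ici 0))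
    (hSb : ∀ t, 0 ≤ t → ‖S t‖ ≤ K) {s : ℝ} (hs : 0 ≤ s) :
    reachableSet S C ⊆ S s '' reachableSet S C + Metric.closedBall 0 (K * C * s) := by
  rintro _ ⟨t, ht, h, hh, hC, rfl⟩
  rcases le_total s t with hst | hts
  · rw [integral_clm_apply_eq_add_apply_integral hSadd hScont hSb hh hs hst hC,
      add_comm (∫ r in (0 : ℝ)..s, S r (h r))]
    have hshifted : ∫ r in (0 : ℝ)..t - s, S r (h (r + s)) ∈ reachableSet S C :=
      ⟨t - s, sub_nonneg.2 hst, fun r => h (r + s), hh.comp_measurable (measurable_add_const s),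
        fun r hr => hC _ ⟨by linarith [hr.1], by linarith [hr.2]⟩, rfl⟩
    exact Set.add_mem_add (mem_image_of_mem _ hshifted) (mem_closedBall_zero_iff.2
      (norm_integral_clm_apply_le_mul hSb hs fun r hr => hC r ⟨hr.1, hr.2.trans hst⟩))
  · have hzero : (0 : E) ∈ reachableSet S C :=
      ⟨0, le_rfl, h, hh, fun r hr => hC r ⟨hr.1, hr.2.trans ht⟩, by simp⟩
    have hKC : 0 ≤ K * C :=
      mul_nonneg ((norm_nonneg _).trans (hSb 0 le_rfl)) ((norm_nonneg _).trans (hC 0 ⟨le_rfl, ht⟩))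
    rw [← zero_add (∫ r in (0 : ℝ)..t, S r (h r))]
    refine Set.add_mem_add ⟨0, hzero, map_zero _⟩ (mem_closedBall_zero_iff.2 ?_)
    exact (norm_integral_clm_apply_le_mul hSb ht hC).trans (by gcongr)

theorem isCompact_closure_reachableSet [CompleteSpace E] {δ : ℝ}
    (hSadd : ∀ s t : ℝ, 0 ≤ s → 0 ≤ t → S (s + t) = (S s).comp (S t))
    (hScont : ∀ x, ContinuousOn (fun t => S t x) (Ici 0))
    (hcpt : ∀ t, 0 < t → IsCompactOperator (S t)) (hδ : 0 < δ)
    (hbound : ∀ t, 0 ≤ t → ‖S t‖ ≤ K * Real.exp (-δ * t)) :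
    IsCompact (closure (reachableSet S C)) := by
  have hSb := norm_le_of_norm_le_mul_exp_neg hδ.le hbound
  refine (totallyBounded_of_forall_subset_add fun U hU => ?_).closure.isCompact_of_isClosed
    isClosed_closure
  obtain ⟨ε, hε, hεU⟩ := Metric.mem_nhds_iff.1 hU
  obtain ⟨s, hs, hsε⟩ := exists_pos_mul_lt hε (K * C)
  refine ⟨S s '' reachableSet S C, ?_, (reachableSet_subset_image_add_closedBall hSadd hScont hSb
    hs.le).trans (add_subset_add_left ((Metric.closedBall_subset_ball hsε).trans hεU))⟩
  have hbdd :=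
    Metric.isBounded_closedBall.subset (reachableSet_subset_closedBall (C := C) hbound hδ)
  exact ((hcpt s hs).isCompact_closure_image_of_bounded hbdd).totallyBounded.subset subset_closure

end SemigroupIntegrals

theorem statement17_general {E : Type*} [NormedAddCommGroup E] [NormedSpace ℝ E] [CompleteSpace E]
    (S : ℝ → E →L[ℝ] E)
    (hSadd : ∀ s t : ℝ, 0 ≤ s → 0 ≤ t → S (s + t) = (S s).comp (S t))
    (hScont : ∀ x : E, ContinuousOn (fun t => S t x) (Set.Ici 0))
    (hcpt : ∀ t : ℝ, 0 < t → IsCompactOperator (S t))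
    (K δ : ℝ) (hδ : 0 < δ)
    (hbound : ∀ t : ℝ, 0 ≤ t → ‖S t‖ ≤ K * Real.exp (-δ * t)) :
    ∀ C > (0:ℝ), ∃ L : Set E, IsCompact L ∧
      ∀ t : ℝ, 0 ≤ t → ∀ h : ℝ → E, StronglyMeasurable h →
        (∀ r ∈ Set.Icc (0:ℝ) t, ‖h r‖ ≤ C) →
        (∫ r in (0:ℝ)..t, S r (h r)) ∈ L :=
  fun C _ => ⟨closure (reachableSet S C),
    isCompact_closure_reachableSet hSadd hScont hcpt hδ hbound,
    fun t ht h hh hC => subset_closure ⟨t, ht, h, hh, hC, rfl⟩⟩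

/-- Let `(S(t))_{t≥0}` be a strongly continuous semigroup on a real Banach
space `E` which is immediately compact and uniformly exponentially stable
(`‖S(t)‖ ≤ K e^{−δt}`). Then for every `C > 0` there is a single compact set `L ⊆ E`
containing all integrals `∫₀ᵗ S(r) h(r) dr`, `t ≥ 0`, over strongly measurable functions
`h` bounded by `C` on `[0,t]`. -/
theorem statement17 {E : Type*} [NormedAddCommGroup E] [NormedSpace ℝ E] [CompleteSpace E]
    (S : ℝ → E →L[ℝ] E)
    (hS0 : S 0 = 1)
    (hSadd : ∀ s t : ℝ, 0 ≤ s → 0 ≤ t → S (s + t) = (S s).comp (S t))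
    (hScont : ∀ x : E, ContinuousOn (fun t => S t x) (Set.Ici 0))
    (hcpt : ∀ t : ℝ, 0 < t → IsCompactOperator (S t))
    (K δ : ℝ) (hK : 1 ≤ K) (hδ : 0 < δ)
    (hbound : ∀ t : ℝ, 0 ≤ t → ‖S t‖ ≤ K * Real.exp (-δ * t)) :
    ∀ C > (0:ℝ), ∃ L : Set E, IsCompact L ∧
      ∀ t : ℝ, 0 ≤ t → ∀ h : ℝ → E, StronglyMeasurable h →
        (∀ r ∈ Set.Icc (0:ℝ) t, ‖h r‖ ≤ C) →
        (∫ r in (0:ℝ)..t, S r (h r)) ∈ L :=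
  statement17_general S hSadd hScont hcpt K δ hδ hbound
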